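/- arXiv:1407.3706 — 4 statements merged into one kernel-verified Lean document; each statement's English description precedes it below -/
import Mathlib

section
/- Let H be a complex Hilbert space, T > 0, (λ_n)_{n ≥ 1} a sequence of positive real numbers and (Ψ_n)_{n ≥ 1} a sequence in H. Extend the indices to ℤ' = ℤ \ {0} by setting λ_{-n} = -λ_n and Ψ_{-n} = Ψ_n for n ≥ 1. Assume the family of functions {t ↦ e^{iλ_n t} Ψ_n}_{n ∈ ℤ'} is a Riesz sequence in L²((0, 2T); H), i.e. there exist 0 < m ≤ M such that for every finitely supported sequence (c_n)_{n ∈ ℤ'} of complex numbers, m Σ|c_n|² ≤ ∫₀^{2T} ‖Σ_n c_n e^{iλ_n t} Ψ_n‖² dt ≤ M Σ|c_n|². Then the families {t ↦ cos(λ_n t) Ψ_n}_{n ≥ 1} and {t ↦ sin(λ_n t) Ψ_n}_{n ≥ 1} are Riesz sequences in L²((0, T); H): there exist 0 < m' ≤ M' such that for every finitely supported complex sequence (c_n)_{n ≥ 1}, m' Σ|c_n|² ≤ ∫₀^{T} ‖Σ_n c_n cos(λ_n t) Ψ_n‖² dt ≤ M' Σ|c_n|², and the same two-sided inequality holds with cos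 replaced by sin. -/
/-!
Write `φ θ = (e^{iθ} + σ e^{-iθ}) / d`, with `(σ, d) = (1, 2)` for `cos` and `(-1, 2i)` for `sin`.
Given coefficients `cₙ` on `n > 0`, the coefficients `c'ₙ = cₙ e^{-iλₙT} / d`,
`c'₋ₙ = σ cₙ e^{iλₙT} / d` turn the exponential sum into `F (t - T)`, where
`F τ = ∑ cₙ φ(λₙ τ) Ψₙ`. As `σ² = 1`, `φ (-θ) = σ φ θ`, so `‖F‖` is even and the integral of
`‖F (t - T)‖²` over `(0, 2T)` is twice that of `‖F‖²` over `(0, T)`; moreover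
`∑ |c'|² = ∑ |c|² / 2`. The exponential Riesz bounds `m, M` thus give `m / 4, M / 4`.
-/

open MeasureTheory Complex Set

section NegUnion

variable {α β : Type*} [AddCommGroup α] [LinearOrder α] [AddCommMonoid β]

theorem disjoint_image_neg_of_pos [IsOrderedAddMonoid α] {s : Finset α} (hs : ∀ n ∈ s, 0 < n) :
    Disjoint s (s.image (- ·)) := by
  rw [Finset.disjoint_left]
  rintro n hn hn'
  obtain ⟨k, hk, rfl⟩ := Finset.mem_image.mp hn'
  exact (neg_pos.mp (hs _ hn)).not_gt (hs k hk)

theorem sum_union_image_neg_of_pos [IsOrderedAddMonoid α] {s : Finset α} (hs : ∀ n ∈ s, 0 < n)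
    (g : α → β) :
    ∑ n ∈ s ∪ s.image (- ·), g n = ∑ n ∈ s, (g n + g (-n)) := by
  rw [Finset.sum_union (disjoint_image_neg_of_pos hs),
    Finset.sum_image (fun _ _ _ _ h => neg_injective h), Finset.sum_add_distrib]

theorem ne_zero_of_mem_union_image_neg {s : Finset α} (hs : ∀ n ∈ s, 0 < n) :
    ∀ n ∈ s ∪ s.image (- ·), n ≠ 0 := by
  intro n hn
  rcases Finset.mem_union.mp hn with h | h
  · exact (hs n h).ne'
  · obtain ⟨k, hk, rfl⟩ := Finset.mem_image.mp h
    exact neg_ne_zero.mpr (hs k hk).ne'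

end NegUnion

theorem integral_Ioo_comp_sub_of_even {g : ℝ → ℝ} (hg : Continuous g)
    (heven : ∀ x, g (-x) = g x) {T : ℝ} (hT : 0 ≤ T) :
    ∫ t in Ioo 0 (2 * T), g (t - T) = 2 * ∫ t in Ioo 0 T, g t := by
  have hIoo : ∀ b : ℝ, 0 ≤ b → ∀ f : ℝ → ℝ, ∫ t in Ioo 0 b, f t = ∫ t in (0 : ℝ)..b, f t :=
    fun b hb f => by rw [intervalIntegral.integral_of_le hb, integral_Ioc_eq_integral_Ioo]
  have hleft : ∫ t in (-T)..0, g t = ∫ t in (0 : ℝ)..T, g t := by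
    simpa [heven] using (intervalIntegral.integral_comp_neg (a := 0) (b := T) g).symm
  rw [hIoo _ (by linarith), hIoo _ hT, intervalIntegral.integral_comp_sub_right,
    zero_sub, show 2 * T - T = T by ring,
    ← intervalIntegral.integral_add_adjacent_intervals (b := 0)
      (hg.intervalIntegrable _ _) (hg.intervalIntegrable _ _), hleft, two_mul]

noncomputable def symmCoeff (σ d : ℂ) (lam : ℤ → ℝ) (T : ℝ) (c : ℤ → ℂ) (n : ℤ) : ℂ :=
  (if 0 < n then c n else σ * c (-n)) * exp (-(I * lam n * T)) / d

theorem norm_symmCoeff_sq {σ d : ℂ} (hσ : ‖σ‖ = 1) (hd : ‖d‖ = 2) (lam : ℤ → ℝ) (T : ℝ)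
    (c : ℤ → ℂ) (n : ℤ) :
    ‖symmCoeff σ d lam T c n‖ ^ 2 = ‖c |n|‖ ^ 2 / 4 := by
  have hexp : ‖exp (-(I * lam n * T))‖ = 1 := by
    rw [norm_exp]; simp
  rcases lt_or_ge 0 n with h | h
  · simp only [symmCoeff, if_pos h, abs_of_pos h, norm_div, norm_mul, hexp, hd]
    ring
  · simp only [symmCoeff, if_neg h.not_gt, abs_of_nonpos h, norm_div, norm_mul, hexp, hd, hσ]
    ring

theorem sum_norm_symmCoeff_sq {σ d : ℂ} (hσ : ‖σ‖ = 1) (hd : ‖d‖ = 2) (lam : ℤ → ℝ) (T : ℝ)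
    {s : Finset ℤ} (hs : ∀ n ∈ s, 0 < n) (c : ℤ → ℂ) :
    ∑ n ∈ s ∪ s.image (- ·), ‖symmCoeff σ d lam T c n‖ ^ 2 = (∑ n ∈ s, ‖c n‖ ^ 2) / 2 := by
  rw [sum_union_image_neg_of_pos hs, Finset.sum_div]
  refine Finset.sum_congr rfl fun n hn => ?_
  rw [norm_symmCoeff_sq hσ hd, norm_symmCoeff_sq hσ hd, abs_neg, abs_of_pos (hs n hn)]
  ring

theorem sum_symmCoeff_smul_exp {H : Type*} [NormedAddCommGroup H] [NormedSpace ℂ H]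
    {φ : ℝ → ℂ} {σ d : ℂ} (hd : d ≠ 0)
    (hφ : ∀ θ : ℝ, φ θ = (exp (θ * I) + σ * exp (-(θ * I))) / d)
    {lam : ℤ → ℝ} (hodd : ∀ n, lam (-n) = -lam n) {Ψ : ℤ → H} (heven : ∀ n, Ψ (-n) = Ψ n)
    (T : ℝ) {s : Finset ℤ} (hs : ∀ n ∈ s, 0 < n) (c : ℤ → ℂ) (t : ℝ) :
    ∑ n ∈ s ∪ s.image (- ·), symmCoeff σ d lam T c n • (exp (I * lam n * t) • Ψ n) =
      ∑ n ∈ s, c n • (φ (lam n * (t - T)) • Ψ n) := by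
  rw [sum_union_image_neg_of_pos hs]
  refine Finset.sum_congr rfl fun n hn => ?_
  have hn_pos : 0 < n := hs n hn
  simp only [symmCoeff, if_pos hn_pos, if_neg (by omega : ¬0 < -n), neg_neg, hodd,
    heven, smul_smul, ← add_smul, hφ]
  congr 1
  have e₁ : exp (-(I * lam n * T)) * exp (I * lam n * t) = exp (↑(lam n * (t - T)) * I) := by
    rw [← exp_add]; push_cast; ring_nf
  have e₂ : exp (-(I * ↑(-lam n) * T)) * exp (I * ↑(-lam n) * t) =
      exp (-(↑(lam n * (t - T)) * I)) := by
    rw [← exp_add]; push_cast; ring_nf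
  rw [← e₁, ← e₂]
  field_simp

theorem riesz_bounds_of_exp_riesz {H : Type*} [NormedAddCommGroup H] [NormedSpace ℂ H]
    {φ : ℝ → ℂ} {σ d : ℂ} (hσ : σ ^ 2 = 1) (hd : ‖d‖ = 2)
    (hφ : ∀ θ : ℝ, φ θ = (exp (θ * I) + σ * exp (-(θ * I))) / d)
    {T : ℝ} (hT : 0 ≤ T) {lam : ℤ → ℝ} {Ψ : ℤ → H}
    (hodd : ∀ n : ℤ, lam (-n) = -lam n) (heven : ∀ n : ℤ, Ψ (-n) = Ψ n) {m M : ℝ}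
    (hriesz : ∀ (s : Finset ℤ), (∀ n ∈ s, n ≠ 0) → ∀ c : ℤ → ℂ,
      m * ∑ n ∈ s, ‖c n‖ ^ 2 ≤
          (∫ t in Ioo (0 : ℝ) (2 * T), ‖∑ n ∈ s, c n • (exp (I * lam n * t) • Ψ n)‖ ^ 2) ∧
        (∫ t in Ioo (0 : ℝ) (2 * T), ‖∑ n ∈ s, c n • (exp (I * lam n * t) • Ψ n)‖ ^ 2) ≤
          M * ∑ n ∈ s, ‖c n‖ ^ 2)
    {s : Finset ℤ} (hs : ∀ n ∈ s, 0 < n) (c : ℤ → ℂ) :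
    m / 4 * ∑ n ∈ s, ‖c n‖ ^ 2 ≤
        (∫ t in Ioo (0 : ℝ) T, ‖∑ n ∈ s, c n • (φ (lam n * t) • Ψ n)‖ ^ 2) ∧
      (∫ t in Ioo (0 : ℝ) T, ‖∑ n ∈ s, c n • (φ (lam n * t) • Ψ n)‖ ^ 2) ≤
        M / 4 * ∑ n ∈ s, ‖c n‖ ^ 2 := by
  have hd₀ : d ≠ 0 := by rintro rfl; norm_num at hd
  have hσ₁ : ‖σ‖ = 1 :=
    (pow_eq_one_iff_of_nonneg (norm_nonneg σ) two_ne_zero).mp (by rw [← norm_pow, hσ, norm_one])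
  set F : ℝ → H := fun τ => ∑ n ∈ s, c n • (φ (lam n * τ) • Ψ n)
  have hφ_cont : Continuous φ := by
    rw [funext hφ]; fun_prop
  have hF_cont : Continuous F := by fun_prop
  have hF_neg : ∀ τ, ‖F (-τ)‖ = ‖F τ‖ := by
    intro τ
    have hφ_neg : ∀ θ, φ (-θ) = σ * φ θ := by
      intro θ
      simp only [hφ, ofReal_neg, neg_mul, neg_neg]
      linear_combination (-(exp (-(θ * I)) / d)) * hσ
    have : F (-τ) = σ • F τ := by
      simp only [F, Finset.smul_sum, mul_neg, hφ_neg, smul_smul]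
      exact Finset.sum_congr rfl fun n _ => by rw [mul_left_comm]
    rw [this, norm_smul, hσ₁, one_mul]
  have hint : ∫ t in Ioo 0 (2 * T),
      ‖∑ n ∈ s ∪ s.image (- ·), symmCoeff σ d lam T c n • (exp (I * lam n * t) • Ψ n)‖ ^ 2 =
        2 * ∫ t in Ioo 0 T, ‖F t‖ ^ 2 := by
    simp only [sum_symmCoeff_smul_exp hd₀ hφ hodd heven T hs]
    exact integral_Ioo_comp_sub_of_even (g := fun τ => ‖F τ‖ ^ 2) (by fun_prop)
      (fun τ => by simp only [hF_neg]) hT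
  obtain ⟨hlow, hup⟩ := hriesz _ (ne_zero_of_mem_union_image_neg hs) (symmCoeff σ d lam T c)
  rw [hint, sum_norm_symmCoeff_sq hσ₁ hd lam T hs] at hlow hup
  constructor <;> linarith

theorem cos_sin_riesz_of_exp_riesz_general
    {H : Type*} [NormedAddCommGroup H] [InnerProductSpace ℂ H]
    (T : ℝ) (hT : 0 < T) (lam : ℤ → ℝ) (Ψ : ℤ → H)
    (hodd : ∀ n : ℤ, lam (-n) = -lam n)
    (heven : ∀ n : ℤ, Ψ (-n) = Ψ n)
    (m M : ℝ) (hm : 0 < m) (hmM : m ≤ M)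
    (hriesz : ∀ (s : Finset ℤ), (∀ n ∈ s, n ≠ 0) → ∀ c : ℤ → ℂ,
      m * ∑ n ∈ s, ‖c n‖ ^ 2 ≤
          (∫ t in Set.Ioo (0 : ℝ) (2 * T),
            ‖∑ n ∈ s, c n • (Complex.exp (Complex.I * (lam n : ℂ) * (t : ℂ)) • Ψ n)‖ ^ 2) ∧
        (∫ t in Set.Ioo (0 : ℝ) (2 * T),
            ‖∑ n ∈ s, c n • (Complex.exp (Complex.I * (lam n : ℂ) * (t : ℂ)) • Ψ n)‖ ^ 2) ≤
          M * ∑ n ∈ s, ‖c n‖ ^ 2) :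
    ∃ m' M' : ℝ, 0 < m' ∧ m' ≤ M' ∧
      (∀ (s : Finset ℤ), (∀ n ∈ s, 0 < n) → ∀ c : ℤ → ℂ,
        m' * ∑ n ∈ s, ‖c n‖ ^ 2 ≤
            (∫ t in Set.Ioo (0 : ℝ) T,
              ‖∑ n ∈ s, c n • ((Real.cos (lam n * t) : ℂ) • Ψ n)‖ ^ 2) ∧
          (∫ t in Set.Ioo (0 : ℝ) T,
              ‖∑ n ∈ s, c n • ((Real.cos (lam n * t) : ℂ) • Ψ n)‖ ^ 2) ≤
            M' * ∑ n ∈ s, ‖c n‖ ^ 2) ∧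
      (∀ (s : Finset ℤ), (∀ n ∈ s, 0 < n) → ∀ c : ℤ → ℂ,
        m' * ∑ n ∈ s, ‖c n‖ ^ 2 ≤
            (∫ t in Set.Ioo (0 : ℝ) T,
              ‖∑ n ∈ s, c n • ((Real.sin (lam n * t) : ℂ) • Ψ n)‖ ^ 2) ∧
          (∫ t in Set.Ioo (0 : ℝ) T,
              ‖∑ n ∈ s, c n • ((Real.sin (lam n * t) : ℂ) • Ψ n)‖ ^ 2) ≤
            M' * ∑ n ∈ s, ‖c n‖ ^ 2) := by
  have hcos : ∀ θ : ℝ, (Real.cos θ : ℂ) = (exp (θ * I) + 1 * exp (-(θ * I))) / 2 := fun θ => by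
    rw [ofReal_cos, cos, one_mul, neg_mul]
  have hsin : ∀ θ : ℝ, (Real.sin θ : ℂ) = (exp (θ * I) + -1 * exp (-(θ * I))) / (2 * I) :=
    fun θ => by
      rw [ofReal_sin, sin]
      field_simp
      linear_combination (exp (-(θ * I)) - exp (θ * I)) * I_sq
  refine ⟨m / 4, M / 4, by positivity, by linarith, fun s hs c => ?_, fun s hs c => ?_⟩
  · exact riesz_bounds_of_exp_riesz (one_pow 2) (by norm_num) hcos hT.le hodd heven hriesz hs c
  · exact riesz_bounds_of_exp_riesz (by norm_num) (by simp) hsin hT.le hodd heven hriesz hs c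

/-- If the exponential family `{e^{iλₙ t} Ψₙ}_{n ∈ ℤ'}` (with `λ₋ₙ = -λₙ`, `Ψ₋ₙ = Ψₙ`) is a
Riesz sequence in `L²((0, 2T); H)`, then the families `{cos(λₙ t) Ψₙ}` and `{sin(λₙ t) Ψₙ}`
(for `n ≥ 1`) are Riesz sequences in `L²((0, T); H)`. -/
theorem cos_sin_riesz_of_exp_riesz
    {H : Type*} [NormedAddCommGroup H] [InnerProductSpace ℂ H] [CompleteSpace H]
    (T : ℝ) (hT : 0 < T) (lam : ℤ → ℝ) (Ψ : ℤ → H)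
    (hpos : ∀ n : ℤ, 0 < n → 0 < lam n)
    (hodd : ∀ n : ℤ, lam (-n) = -lam n)
    (heven : ∀ n : ℤ, Ψ (-n) = Ψ n)
    (m M : ℝ) (hm : 0 < m) (hmM : m ≤ M)
    (hriesz : ∀ (s : Finset ℤ), (∀ n ∈ s, n ≠ 0) → ∀ c : ℤ → ℂ,
      m * ∑ n ∈ s, ‖c n‖ ^ 2 ≤
          (∫ t in Set.Ioo (0 : ℝ) (2 * T),
            ‖∑ n ∈ s, c n • (Complex.exp (Complex.I * (lam n : ℂ) * (t : ℂ)) • Ψ n)‖ ^ 2) ∧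
        (∫ t in Set.Ioo (0 : ℝ) (2 * T),
            ‖∑ n ∈ s, c n • (Complex.exp (Complex.I * (lam n : ℂ) * (t : ℂ)) • Ψ n)‖ ^ 2) ≤
          M * ∑ n ∈ s, ‖c n‖ ^ 2) :
    ∃ m' M' : ℝ, 0 < m' ∧ m' ≤ M' ∧
      (∀ (s : Finset ℤ), (∀ n ∈ s, 0 < n) → ∀ c : ℤ → ℂ,
        m' * ∑ n ∈ s, ‖c n‖ ^ 2 ≤
            (∫ t in Set.Ioo (0 : ℝ) T,
              ‖∑ n ∈ s, c n • ((Real.cos (lam n * t) : ℂ) • Ψ n)‖ ^ 2) ∧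
          (∫ t in Set.Ioo (0 : ℝ) T,
              ‖∑ n ∈ s, c n • ((Real.cos (lam n * t) : ℂ) • Ψ n)‖ ^ 2) ≤
            M' * ∑ n ∈ s, ‖c n‖ ^ 2) ∧
      (∀ (s : Finset ℤ), (∀ n ∈ s, 0 < n) → ∀ c : ℤ → ℂ,
        m' * ∑ n ∈ s, ‖c n‖ ^ 2 ≤
            (∫ t in Set.Ioo (0 : ℝ) T,
              ‖∑ n ∈ s, c n • ((Real.sin (lam n * t) : ℂ) • Ψ n)‖ ^ 2) ∧
          (∫ t in Set.Ioo (0 : ℝ) T,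
              ‖∑ n ∈ s, c n • ((Real.sin (lam n * t) : ℂ) • Ψ n)‖ ^ 2) ≤
            M' * ∑ n ∈ s, ‖c n‖ ^ 2) :=
  cos_sin_riesz_of_exp_riesz_general T hT lam Ψ hodd heven m M hm hmM hriesz
end

section
/- Let λ > 0, T > 0, K : [0, T] → ℝ continuous, and let ψ : [0, T] → ℝ be twice continuously differentiable with ψ''(t) = −λ² ψ(t) + ∫₀ᵗ K(t − s) ψ(s) ds for all t ∈ [0, T], ψ(0) = 0 and ψ'(0) = 1. Then ψ satisfies the Volterra integral equation ψ(t) = (1/λ) sin(λ t) + ∫₀ᵗ [ (1/λ) ∫₀^{t−s} K(r) sin(λ(t − s − r)) dr ] ψ(s) ds for all t ∈ [0, T]. -/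
open Set intervalIntegral

/-!
Write `(f ⋆ g)(t) = ∫₀ᵗ f (t - s) g(s) ds`. For fixed `t`, the function
`s ↦ sin (λ (t - s)) ψ'(s) + λ cos (λ (t - s)) ψ(s)` has derivative
`sin (λ (t - s)) (ψ'' + λ² ψ)(s)`, and the equation turns `ψ'' + λ² ψ` into the memory term
`K ⋆ ψ`. Integrating over `[0, t]` gives `λ ψ(t) - sin (λ t) = (sin (λ ·) ⋆ (K ⋆ ψ))(t)`,
and associativity of the convolution on `[0, t]` (Fubini on the triangle `r ≤ s`) turns the
right-hand side into `((K ⋆ sin (λ ·)) ⋆ ψ)(t)`.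
-/

open MeasureTheory Function Real

theorem harmonic_oscillator_duhamel (lam t : ℝ) {ψ ψ' ψ'' : ℝ → ℝ}
    (hψ : ∀ s ∈ uIcc 0 t, HasDerivAt ψ (ψ' s) s)
    (hψ' : ∀ s ∈ uIcc 0 t, HasDerivAt ψ' (ψ'' s) s)
    (hint : IntervalIntegrable (fun s => sin (lam * (t - s)) * (ψ'' s + lam ^ 2 * ψ s))
      volume 0 t) :
    ∫ s in (0 : ℝ)..t, sin (lam * (t - s)) * (ψ'' s + lam ^ 2 * ψ s) =
      lam * ψ t - sin (lam * t) * ψ' 0 - lam * cos (lam * t) * ψ 0 := by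
  have hphase : ∀ s, HasDerivAt (fun s => lam * (t - s)) (-lam) s := fun s => by
    simpa using ((hasDerivAt_id s).const_sub t).const_mul lam
  rw [integral_eq_sub_of_hasDerivAt (f := fun s => sin (lam * (t - s)) * ψ' s
      + lam * cos (lam * (t - s)) * ψ s) (fun s hs => ?_) hint]
  · simp only [sub_self, mul_zero, sin_zero, zero_mul, cos_zero, mul_one, zero_add, sub_zero]
    ring
  · have h := (((hphase s).sin.mul (hψ' s hs)).add
      (((hphase s).cos.const_mul lam).mul (hψ s hs)))
    exact h.congr_deriv (by ring)

theorem integral_integral_triangle_swap {E : Type*} [NormedAddCommGroup E] [NormedSpace ℝ E]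
    {t : ℝ} (ht : 0 ≤ t) {H : ℝ → ℝ → E}
    (hH : ContinuousOn (uncurry H) ({p : ℝ × ℝ | p.2 ≤ p.1} ∩ Icc 0 t ×ˢ Icc 0 t)) :
    ∫ s in (0 : ℝ)..t, ∫ r in (0 : ℝ)..s, H s r =
      ∫ r in (0 : ℝ)..t, ∫ s in r..t, H s r := by
  set S : Set (ℝ × ℝ) := {p | p.2 ≤ p.1}
  have hS : MeasurableSet S := measurableSet_le measurable_snd measurable_fst
  set F : ℝ → ℝ → E := fun s r => S.indicator (uncurry H) (s, r)
  have hF : Integrable (uncurry F)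
      ((volume.restrict (Ioc 0 t)).prod (volume.restrict (Ioc 0 t))) := by
    have hcompact : IsCompact (S ∩ Icc 0 t ×ˢ Icc 0 t) :=
      (isCompact_Icc.prod isCompact_Icc).inter_left (isClosed_le continuous_snd continuous_fst)
    rw [Measure.prod_restrict]
    refine (integrable_indicator_iff hS).2 ?_
    rw [IntegrableOn, Measure.restrict_restrict hS]
    exact (hH.integrableOn_compact hcompact).mono_set
      (inter_subset_inter_right _ (prod_mono Ioc_subset_Icc_self Ioc_subset_Icc_self))
  have inner_left : ∀ s ∈ Ioc 0 t, ∫ r in Ioc 0 t, F s r = ∫ r in (0 : ℝ)..s, H s r := by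
    intro s hs
    have hdom : Ioc 0 t ∩ Iic s = Ioc 0 s := by rw [Ioc_inter_Iic, inf_eq_right.2 hs.2]
    rw [integral_of_le hs.1.le, ← hdom, ← setIntegral_indicator measurableSet_Iic]
    rfl
  have inner_right : ∀ r ∈ Ioc 0 t, ∫ s in Ioc 0 t, F s r = ∫ s in r..t, H s r := by
    intro r hr
    have hdom : Ioc 0 t ∩ Ici r = Icc r t := by
      ext s
      simp only [mem_inter_iff, mem_Ioc, mem_Ici, mem_Icc]
      grind
    rw [integral_of_le hr.2, ← integral_Icc_eq_integral_Ioc (x := r), ← hdom,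
      ← setIntegral_indicator measurableSet_Ici]
    rfl
  calc ∫ s in (0 : ℝ)..t, ∫ r in (0 : ℝ)..s, H s r
      = ∫ s in Ioc 0 t, ∫ r in Ioc 0 t, F s r := by
        rw [integral_of_le ht]
        exact setIntegral_congr_fun measurableSet_Ioc fun s hs => (inner_left s hs).symm
    _ = ∫ r in Ioc 0 t, ∫ s in Ioc 0 t, F s r := integral_integral_swap hF
    _ = ∫ r in (0 : ℝ)..t, ∫ s in r..t, H s r := by
        rw [integral_of_le ht]
        exact setIntegral_congr_fun measurableSet_Ioc inner_right

theorem truncated_convolution_assoc {t : ℝ} (ht : 0 ≤ t) {f K ψ : ℝ → ℝ}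
    (hf : ContinuousOn f (Icc 0 t)) (hK : ContinuousOn K (Icc 0 t))
    (hψ : ContinuousOn ψ (Icc 0 t)) :
    ∫ s in (0 : ℝ)..t, f (t - s) * ∫ r in (0 : ℝ)..s, K (s - r) * ψ r =
      ∫ r in (0 : ℝ)..t, (∫ x in (0 : ℝ)..(t - r), K x * f (t - r - x)) * ψ r := by
  have hH : ContinuousOn (uncurry fun s r => f (t - s) * K (s - r) * ψ r)
      ({p : ℝ × ℝ | p.2 ≤ p.1} ∩ Icc 0 t ×ˢ Icc 0 t) := by
    have hmaps : ∀ p ∈ {p : ℝ × ℝ | p.2 ≤ p.1} ∩ Icc 0 t ×ˢ Icc 0 t,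
        t - p.1 ∈ Icc 0 t ∧ p.1 - p.2 ∈ Icc 0 t ∧ p.2 ∈ Icc 0 t := by
      rintro ⟨s, r⟩ ⟨hrs : r ≤ s, ⟨hs₀, hst⟩, hr₀, hrt⟩
      exact ⟨⟨by linarith, by linarith⟩, ⟨by linarith, by linarith⟩, ⟨hr₀, hrt⟩⟩
    exact ((hf.comp (by fun_prop) fun p hp => (hmaps p hp).1).mul
      (hK.comp (by fun_prop) fun p hp => (hmaps p hp).2.1)).mul
      (hψ.comp (by fun_prop) fun p hp => (hmaps p hp).2.2)
  calc ∫ s in (0 : ℝ)..t, f (t - s) * ∫ r in (0 : ℝ)..s, K (s - r) * ψ r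
      = ∫ s in (0 : ℝ)..t, ∫ r in (0 : ℝ)..s, f (t - s) * K (s - r) * ψ r := by
        simp only [mul_assoc, intervalIntegral.integral_const_mul]
    _ = ∫ r in (0 : ℝ)..t, (∫ s in r..t, f (t - s) * K (s - r)) * ψ r := by
        simp only [integral_integral_triangle_swap ht hH, intervalIntegral.integral_mul_const]
    _ = ∫ r in (0 : ℝ)..t, (∫ x in (0 : ℝ)..(t - r), K x * f (t - r - x)) * ψ r := by
        refine integral_congr fun r _ => ?_
        have hshift := integral_comp_add_right (a := 0) (b := t - r)
          (fun s => f (t - s) * K (s - r)) r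
        rw [zero_add, sub_add_cancel] at hshift
        rw [← hshift]
        congr 1
        refine integral_congr fun x _ => ?_
        simp only [add_sub_cancel_right, sub_add_eq_sub_sub_swap, mul_comm]

theorem memory_oscillator_volterra_form_general
    (lam T : ℝ) (hlam : 0 < lam)
    (K : ℝ → ℝ) (hK : ContinuousOn K (Icc 0 T))
    (ψ ψ' ψ'' : ℝ → ℝ)
    (hψ : ∀ t ∈ Icc 0 T, HasDerivAt ψ (ψ' t) t)
    (hψ' : ∀ t ∈ Icc 0 T, HasDerivAt ψ' (ψ'' t) t)
    (hψ'' : ContinuousOn ψ'' (Icc 0 T))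
    (heq : ∀ t ∈ Icc 0 T,
      ψ'' t = -lam ^ 2 * ψ t + ∫ s in (0 : ℝ)..t, K (t - s) * ψ s)
    (h0 : ψ 0 = 0) (h1 : ψ' 0 = 1) :
    ∀ t ∈ Icc 0 T,
      ψ t = (1 / lam) * Real.sin (lam * t) +
        ∫ s in (0 : ℝ)..t,
          ((1 / lam) * ∫ r in (0 : ℝ)..(t - s), K r * Real.sin (lam * (t - s - r))) * ψ s := by
  intro t ht
  have hsub : uIcc 0 t ⊆ Icc 0 T := uIcc_subset_Icc ⟨le_rfl, ht.1.trans ht.2⟩ ht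
  have hψc : ContinuousOn ψ (Icc 0 T) := fun x hx => (hψ x hx).continuousAt.continuousWithinAt
  have hint : IntervalIntegrable (fun s => sin (lam * (t - s)) * (ψ'' s + lam ^ 2 * ψ s))
      volume 0 t :=
    ((by fun_prop : Continuous fun s => sin (lam * (t - s))).continuousOn.mul
      ((hψ''.add (hψc.const_smul (lam ^ 2))).mono hsub)).intervalIntegrable
  have hforcing : ∀ s ∈ uIcc 0 t, sin (lam * (t - s)) * (ψ'' s + lam ^ 2 * ψ s) =
      sin (lam * (t - s)) * ∫ r in (0 : ℝ)..s, K (s - r) * ψ r := fun s hs => by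
    rw [heq s (hsub hs)]
    ring
  have hduhamel := harmonic_oscillator_duhamel lam t (fun s hs => hψ s (hsub hs))
    (fun s hs => hψ' s (hsub hs)) hint
  rw [h0, h1, integral_congr hforcing,
    truncated_convolution_assoc ht.1 (f := fun x => sin (lam * x)) (by fun_prop)
      (hK.mono (Icc_subset_Icc_right ht.2)) (hψc.mono (Icc_subset_Icc_right ht.2))] at hduhamel
  simp only [mul_assoc, intervalIntegral.integral_const_mul, hduhamel]
  field_simp
  ring

/-- The second-order equation with memory `ψ'' = -λ² ψ + K * ψ`, `ψ(0) = 0`, `ψ'(0) = 1`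
is equivalent to the Volterra integral equation
`ψ(t) = (1/λ) sin(λt) + ∫₀ᵗ [(1/λ) ∫₀^{t-s} K(r) sin(λ(t-s-r)) dr] ψ(s) ds`. -/
theorem memory_oscillator_volterra_form
    (lam T : ℝ) (hlam : 0 < lam) (hT : 0 < T)
    (K : ℝ → ℝ) (hK : ContinuousOn K (Icc 0 T))
    (ψ ψ' ψ'' : ℝ → ℝ)
    (hψ : ∀ t ∈ Icc 0 T, HasDerivAt ψ (ψ' t) t)
    (hψ' : ∀ t ∈ Icc 0 T, HasDerivAt ψ' (ψ'' t) t)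
    (hψ'' : ContinuousOn ψ'' (Icc 0 T))
    (heq : ∀ t ∈ Icc 0 T,
      ψ'' t = -lam ^ 2 * ψ t + ∫ s in (0 : ℝ)..t, K (t - s) * ψ s)
    (h0 : ψ 0 = 0) (h1 : ψ' 0 = 1) :
    ∀ t ∈ Icc 0 T,
      ψ t = (1 / lam) * Real.sin (lam * t) +
        ∫ s in (0 : ℝ)..t,
          ((1 / lam) * ∫ r in (0 : ℝ)..(t - s), K r * Real.sin (lam * (t - s - r))) * ψ s :=
  memory_oscillator_volterra_form_general lam T hlam K hK ψ ψ' ψ'' hψ hψ' hψ'' heq h0 h1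
end

section
/- Let T > 0, b ∈ ℝ, K : [0, T] → ℝ continuous, and let λ_1, …, λ_N be positive real numbers such that λ_1², …, λ_N² are pairwise distinct. For each n, let ψ_n : [0, T] → ℝ be the twice continuously differentiable solution of ψ_n''(t) = −λ_n² ψ_n(t) + b ψ_n(t) + ∫₀ᵗ K(t − s) ψ_n(s) ds with ψ_n(0) = 0 and ψ_n'(0) = 1. Let H be a real normed vector space and v_1, …, v_N ∈ H. If Σ_{n=1}^{N} ψ_n(t) · v_n = 0 for every t ∈ [0, T], then v_n = 0 for every n = 1, …, N. -/
/-!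
Differentiating `∑ ψₙ(t) cₙ ≡ 0` twice and substituting the equation, the terms `b ψₙ` and the
memory term recombine into multiples of the original vanishing sum, so `∑ ψₙ(t) λₙ² cₙ ≡ 0`.
Iterating, `∑ (λₙ²)ᵏ ψₙ(t) cₙ = 0` for all `k`, and since the `λₙ²` are distinct the Vandermonde
matrix is invertible, so `ψₙ(t) cₙ = 0`. As `ψₙ'(0) = 1`, no `ψₙ` vanishes on `[0, T]`, whence
`cₙ = 0`. Vector coefficients are reduced to scalar ones by Hahn–Banach.
-/

open Set intervalIntegral

theorem eqOn_zero_of_hasDerivWithinAt_of_eqOn_zero {E : Type*} [NormedAddCommGroup E]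
    [NormedSpace ℝ E] {s : Set ℝ} (hs : UniqueDiffOn ℝ s) {f f' : ℝ → E}
    (hf : ∀ t ∈ s, HasDerivWithinAt f (f' t) s t) (h0 : EqOn f 0 s) : EqOn f' 0 s :=
  fun t ht => (hs t ht).eq_deriv _ (hf t ht) ((hasDerivWithinAt_const t s 0).congr h0 (h0 ht))

section LinearCombination

variable {ι : Type*} [Fintype ι]

theorem sum_deriv_mul_eq_zero_of_sum_mul_eq_zero {a b : ℝ} (hab : a < b) {f f' : ι → ℝ → ℝ}
    (hf : ∀ n, ∀ t ∈ Icc a b, HasDerivAt (f n) (f' n t) t) {c : ι → ℝ}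
    (hc : ∀ t ∈ Icc a b, ∑ n, f n t * c n = 0) : ∀ t ∈ Icc a b, ∑ n, f' n t * c n = 0 :=
  eqOn_zero_of_hasDerivWithinAt_of_eqOn_zero (uniqueDiffOn_Icc hab)
    (fun t ht => (HasDerivAt.fun_sum fun n _ => (hf n t ht).mul_const (c n)).hasDerivWithinAt) hc

theorem sum_convolution_mul_eq_zero_of_sum_mul_eq_zero {T : ℝ} {K : ℝ → ℝ}
    (hK : ContinuousOn K (Icc 0 T)) {f : ι → ℝ → ℝ} (hf : ∀ n, ContinuousOn (f n) (Icc 0 T))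
    {c : ι → ℝ} (hc : ∀ s ∈ Icc 0 T, ∑ n, f n s * c n = 0) {t : ℝ} (ht : t ∈ Icc 0 T) :
    ∑ n, (∫ s in (0 : ℝ)..t, K (t - s) * f n s) * c n = 0 := by
  have hsub : Icc 0 t ⊆ Icc 0 T := Icc_subset_Icc le_rfl ht.2
  have hKt : ContinuousOn (fun s => K (t - s)) (Icc 0 t) :=
    hK.comp (by fun_prop) fun s hs => ⟨by linarith [hs.2], by linarith [hs.1, ht.2]⟩
  have hint : ∀ n, IntervalIntegrable (fun s => K (t - s) * f n s * c n) MeasureTheory.volume 0 t :=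
    fun n => ContinuousOn.intervalIntegrable <| by
      rw [uIcc_of_le ht.1]
      exact (hKt.mul ((hf n).mono hsub)).mul continuousOn_const
  calc ∑ n, (∫ s in (0 : ℝ)..t, K (t - s) * f n s) * c n
      = ∫ s in (0 : ℝ)..t, ∑ n, K (t - s) * f n s * c n := by
        simp_rw [← integral_mul_const]
        exact (integral_finsetSum fun n _ => hint n).symm
    _ = ∫ s in (0 : ℝ)..t, K (t - s) * ∑ n, f n s * c n := by
        simp_rw [Finset.mul_sum, mul_assoc]
    _ = ∫ _ in (0 : ℝ)..t, (0 : ℝ) := integral_congr fun s hs => by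
        rw [uIcc_of_le ht.1] at hs
        simp only [hc s (hsub hs), mul_zero]
    _ = 0 := integral_zero

end LinearCombination

section MemoryEquation

variable {ι : Type*} [Fintype ι] {T b : ℝ} {K : ℝ → ℝ} {lam : ι → ℝ} {ψ ψ' ψ'' : ι → ℝ → ℝ}

theorem sum_mul_sq_mul_eq_zero_of_sum_mul_eq_zero (hT : 0 < T) (hK : ContinuousOn K (Icc 0 T))
    (hψ : ∀ n, ∀ t ∈ Icc 0 T, HasDerivAt (ψ n) (ψ' n t) t)
    (hψ' : ∀ n, ∀ t ∈ Icc 0 T, HasDerivAt (ψ' n) (ψ'' n t) t)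
    (heq : ∀ n, ∀ t ∈ Icc 0 T,
      ψ'' n t = -lam n ^ 2 * ψ n t + b * ψ n t + ∫ s in (0 : ℝ)..t, K (t - s) * ψ n s)
    {c : ι → ℝ} (hc : ∀ t ∈ Icc 0 T, ∑ n, ψ n t * c n = 0) :
    ∀ t ∈ Icc 0 T, ∑ n, ψ n t * (lam n ^ 2 * c n) = 0 := by
  intro t ht
  have hc' := sum_deriv_mul_eq_zero_of_sum_mul_eq_zero hT hψ hc
  have hc'' := sum_deriv_mul_eq_zero_of_sum_mul_eq_zero hT hψ' hc'
  have hmemory := sum_convolution_mul_eq_zero_of_sum_mul_eq_zero hK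
    (fun n t ht => (hψ n t ht).continuousAt.continuousWithinAt) hc ht
  calc ∑ n, ψ n t * (lam n ^ 2 * c n)
      = b * ∑ n, ψ n t * c n + ∑ n, (∫ s in (0 : ℝ)..t, K (t - s) * ψ n s) * c n
          - ∑ n, ψ'' n t * c n := by
        simp only [Finset.mul_sum, ← Finset.sum_add_distrib, ← Finset.sum_sub_distrib, heq _ t ht]
        exact Finset.sum_congr rfl fun n _ => by ring
    _ = 0 := by rw [hc t ht, hmemory, hc'' t ht]; ring

theorem sum_mul_sq_pow_mul_eq_zero_of_sum_mul_eq_zero (hT : 0 < T)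
    (hK : ContinuousOn K (Icc 0 T)) (hψ : ∀ n, ∀ t ∈ Icc 0 T, HasDerivAt (ψ n) (ψ' n t) t)
    (hψ' : ∀ n, ∀ t ∈ Icc 0 T, HasDerivAt (ψ' n) (ψ'' n t) t)
    (heq : ∀ n, ∀ t ∈ Icc 0 T,
      ψ'' n t = -lam n ^ 2 * ψ n t + b * ψ n t + ∫ s in (0 : ℝ)..t, K (t - s) * ψ n s)
    {c : ι → ℝ} (hc : ∀ t ∈ Icc 0 T, ∑ n, ψ n t * c n = 0) (k : ℕ) :
    ∀ t ∈ Icc 0 T, ∑ n, ψ n t * ((lam n ^ 2) ^ k * c n) = 0 := by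
  induction k with
  | zero => simpa using hc
  | succ k ih =>
    simpa only [pow_succ', mul_assoc] using
      sum_mul_sq_mul_eq_zero_of_sum_mul_eq_zero hT hK hψ hψ' heq ih

end MemoryEquation

theorem eq_zero_of_sum_mul_eq_zero {N : ℕ} {T b : ℝ} {K : ℝ → ℝ} {lam : Fin N → ℝ}
    {ψ ψ' ψ'' : Fin N → ℝ → ℝ} (hT : 0 < T) (hK : ContinuousOn K (Icc 0 T))
    (hdist : ∀ n m : Fin N, lam n ^ 2 = lam m ^ 2 → n = m)
    (hψ : ∀ n, ∀ t ∈ Icc 0 T, HasDerivAt (ψ n) (ψ' n t) t)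
    (hψ' : ∀ n, ∀ t ∈ Icc 0 T, HasDerivAt (ψ' n) (ψ'' n t) t)
    (heq : ∀ n, ∀ t ∈ Icc 0 T,
      ψ'' n t = -lam n ^ 2 * ψ n t + b * ψ n t + ∫ s in (0 : ℝ)..t, K (t - s) * ψ n s)
    (h1 : ∀ n, ψ' n 0 = 1) {c : Fin N → ℝ} (hc : ∀ t ∈ Icc 0 T, ∑ n, ψ n t * c n = 0)
    (n : Fin N) : c n = 0 := by
  have hprod : ∀ t ∈ Icc 0 T, ψ n t * c n = 0 := fun t ht =>
    congrFun (Matrix.eq_zero_of_forall_pow_sum_mul_pow_eq_zero (f := fun m => lam m ^ 2)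
      (v := fun m => ψ m t * c m) (fun m m' h => hdist m m' h) fun k => by
        rw [← sum_mul_sq_pow_mul_eq_zero_of_sum_mul_eq_zero hT hK hψ hψ' heq hc k t ht]
        exact Finset.sum_congr rfl fun m _ => by ring) n
  by_contra hcn
  have hψ_zero : EqOn (ψ n) 0 (Icc 0 T) := fun t ht =>
    (mul_eq_zero.mp (hprod t ht)).resolve_right hcn
  have hψ'_zero := eqOn_zero_of_hasDerivWithinAt_of_eqOn_zero (uniqueDiffOn_Icc hT)
    (fun t ht => (hψ n t ht).hasDerivWithinAt) hψ_zero
  simpa [h1 n] using hψ'_zero (left_mem_Icc.mpr hT.le)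

theorem finite_sum_vanishing_forces_zero_general
    (T : ℝ) (hT : 0 < T) (b : ℝ) (K : ℝ → ℝ) (hK : ContinuousOn K (Icc 0 T))
    (N : ℕ) (lam : Fin N → ℝ)
    (hdist : ∀ n m : Fin N, lam n ^ 2 = lam m ^ 2 → n = m)
    (ψ ψ' ψ'' : Fin N → ℝ → ℝ)
    (hψ : ∀ n, ∀ t ∈ Icc 0 T, HasDerivAt (ψ n) (ψ' n t) t)
    (hψ' : ∀ n, ∀ t ∈ Icc 0 T, HasDerivAt (ψ' n) (ψ'' n t) t)
    (heq : ∀ n, ∀ t ∈ Icc 0 T,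
      ψ'' n t = -lam n ^ 2 * ψ n t + b * ψ n t + ∫ s in (0 : ℝ)..t, K (t - s) * ψ n s)
    (h1 : ∀ n, ψ' n 0 = 1)
    {H : Type*} [NormedAddCommGroup H] [NormedSpace ℝ H]
    (v : Fin N → H)
    (hsum : ∀ t ∈ Icc 0 T, ∑ n, ψ n t • v n = 0) :
    ∀ n, v n = 0 := by
  intro n
  refine SeparatingDual.eq_zero_of_forall_dual_eq_zero (R := ℝ) fun f => ?_
  refine eq_zero_of_sum_mul_eq_zero (c := fun m => f (v m)) hT hK hdist hψ hψ' heq h1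
    (fun t ht => ?_) n
  simpa [map_sum] using congrArg f (hsum t ht)

/-- If `ψ₁, …, ψ_N` solve `ψₙ'' = -λₙ² ψₙ + b ψₙ + K * ψₙ`, `ψₙ(0) = 0`, `ψₙ'(0) = 1`, with
`λₙ > 0` and the `λₙ²` pairwise distinct, and if `∑ₙ ψₙ(t) vₙ = 0` on `[0, T]` for vectors
`vₙ` in a real normed space, then all `vₙ` vanish. -/
theorem finite_sum_vanishing_forces_zero
    (T : ℝ) (hT : 0 < T) (b : ℝ) (K : ℝ → ℝ) (hK : ContinuousOn K (Icc 0 T))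
    (N : ℕ) (lam : Fin N → ℝ) (hpos : ∀ n, 0 < lam n)
    (hdist : ∀ n m : Fin N, lam n ^ 2 = lam m ^ 2 → n = m)
    (ψ ψ' ψ'' : Fin N → ℝ → ℝ)
    (hψ : ∀ n, ∀ t ∈ Icc 0 T, HasDerivAt (ψ n) (ψ' n t) t)
    (hψ' : ∀ n, ∀ t ∈ Icc 0 T, HasDerivAt (ψ' n) (ψ'' n t) t)
    (hψ'' : ∀ n, ContinuousOn (ψ'' n) (Icc 0 T))
    (heq : ∀ n, ∀ t ∈ Icc 0 T,
      ψ'' n t = -lam n ^ 2 * ψ n t + b * ψ n t + ∫ s in (0 : ℝ)..t, K (t - s) * ψ n s)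
    (h0 : ∀ n, ψ n 0 = 0) (h1 : ∀ n, ψ' n 0 = 1)
    {H : Type*} [NormedAddCommGroup H] [NormedSpace ℝ H]
    (v : Fin N → H)
    (hsum : ∀ t ∈ Icc 0 T, ∑ n, ψ n t • v n = 0) :
    ∀ n, v n = 0 :=
  finite_sum_vanishing_forces_zero_general T hT b K hK N lam hdist ψ ψ' ψ'' hψ hψ' heq h1 v hsum
end

section
/- Let T > 0, b ∈ ℝ, K : [0, T] → ℝ continuous, (λ_n)_{n ≥ 1} positive real numbers, and for each n let ψ_n : [0, T] → ℝ be the twice continuously differentiable solution of ψ_n''(t) = −λ_n² ψ_n(t) + b ψ_n(t) + ∫₀ᵗ K(t − s) ψ_n(s) ds with ψ_n(0) = 0 and ψ_n'(0) = 1. Let H be a real Banach space and (v_n)_{n ≥ 1} a sequence in H. Assume: (i) the series Σ_n ψ_n(t) v_n converges uniformly on [0, T] with sum 0 for every t; (ii) the series Σ_n ψ_n'(t) v_n converges uniformly on [0, T]; (iii) the series Σ_n λ_n² ψ_n(t) v_n converges uniformly on [0, T]. Then Σ_n λ_n² ψ_n(t) v_n = 0 for every t ∈ [0, T]. -/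
/-!
Differentiating `∑ ψₙ vₙ = 0` termwise (legitimate because the derived series converges
uniformly) shows that `g = ∑ ψₙ' vₙ` vanishes on `(0, T)`. By the equation,
`∑ ψₙ'' vₙ = b ∑ ψₙ vₙ + K * ∑ ψₙ vₙ - ∑ λₙ² ψₙ vₙ`, and the first two terms tend uniformly
to `0`, so the second derived series converges uniformly to `-S`. Differentiating `g = 0`
once more gives `S = 0` on `(0, T)`, and continuity of the uniform limit `S` extends this
to `[0, T]`.
-/

open Set intervalIntegral Filter Topology

section

variable {H : Type*} [NormedAddCommGroup H] [NormedSpace ℝ H]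

theorem eqOn_zero_of_tendstoUniformlyOn_deriv {ι : Type*} {l : Filter ι} [l.NeBot]
    {s : Set ℝ} (hs : IsOpen s) {F F' : ι → ℝ → H} {G : ℝ → H}
    (hF : ∀ i, ∀ t ∈ s, HasDerivAt (F i) (F' i t) t)
    (hF0 : ∀ t ∈ s, Tendsto (fun i => F i t) l (𝓝 0))
    (hF' : TendstoUniformlyOn F' G l s) : EqOn G 0 s := fun t ht =>
  (hasDerivAt_of_tendstoUniformlyOn (g := fun _ => 0) hs hF' (.of_forall hF) hF0 ht).unique
    (hasDerivAt_const t 0)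

theorem intervalIntegrable_comp_sub_mul {T t : ℝ} {K f : ℝ → ℝ}
    (hK : ContinuousOn K (Icc 0 T)) (hf : ContinuousOn f (Icc 0 T)) (ht : t ∈ Icc 0 T) :
    IntervalIntegrable (fun s => K (t - s) * f s) MeasureTheory.volume 0 t := by
  have hsub : uIcc 0 t ⊆ Icc 0 T := by
    rw [uIcc_of_le ht.1]
    exact Icc_subset_Icc le_rfl ht.2
  have hmaps : MapsTo (fun s => t - s) (uIcc 0 t) (Icc 0 T) := by
    rw [uIcc_of_le ht.1]
    intro s hs
    constructor <;> linarith [hs.1, hs.2, ht.2]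
  exact ((hK.comp (continuous_sub_left t).continuousOn hmaps).mul (hf.mono hsub)).intervalIntegrable

theorem integral_smul_finset_sum_smul [CompleteSpace H] {ι : Type*} (u : Finset ι)
    {a b : ℝ} {k : ℝ → ℝ} {f : ι → ℝ → ℝ} (v : ι → H)
    (hf : ∀ i ∈ u, IntervalIntegrable (fun s => k s * f i s) MeasureTheory.volume a b) :
    ∫ s in a..b, k s • ∑ i ∈ u, f i s • v i = ∑ i ∈ u, (∫ s in a..b, k s * f i s) • v i := by
  simp_rw [Finset.smul_sum, smul_smul]
  rw [integral_finsetSum fun i hi =>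
    ⟨(hf i hi).1.smul_const (v i), (hf i hi).2.smul_const (v i)⟩]
  exact Finset.sum_congr rfl fun i _ => integral_smul_const _ _

theorem norm_integral_comp_sub_smul_le {T M δ t : ℝ} {K : ℝ → ℝ} {F : ℝ → H}
    (hK : ∀ x ∈ Icc 0 T, |K x| ≤ M) (hF : ∀ s ∈ Icc 0 T, ‖F s‖ ≤ δ) (ht : t ∈ Icc 0 T) :
    ‖∫ s in 0..t, K (t - s) • F s‖ ≤ M * δ * T := by
  have hT : (0 : ℝ) ∈ Icc 0 T := ⟨le_rfl, ht.1.trans ht.2⟩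
  have hM : 0 ≤ M := (abs_nonneg _).trans (hK 0 hT)
  have hδ : 0 ≤ δ := (norm_nonneg _).trans (hF 0 hT)
  have hpoint : ∀ s ∈ uIoc 0 t, ‖K (t - s) • F s‖ ≤ M * δ := by
    rw [uIoc_of_le ht.1]
    intro s hs
    rw [norm_smul, Real.norm_eq_abs]
    exact mul_le_mul (hK _ ⟨by linarith [hs.2], by linarith [hs.1, ht.2]⟩)
      (hF s ⟨hs.1.le, hs.2.trans ht.2⟩) (norm_nonneg _) hM
  calc ‖∫ s in 0..t, K (t - s) • F s‖ ≤ M * δ * |t - 0| :=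
        norm_integral_le_of_norm_le_const hpoint
    _ ≤ M * δ * T := by
      rw [sub_zero, abs_of_nonneg ht.1]
      exact mul_le_mul_of_nonneg_left ht.2 (mul_nonneg hM hδ)

theorem TendstoUniformlyOn.integral_comp_sub_smul {T : ℝ} {K : ℝ → ℝ}
    (hK : ContinuousOn K (Icc 0 T)) {ι : Type*} {l : Filter ι} {F : ι → ℝ → H}
    (hF : TendstoUniformlyOn F (fun _ => 0) l (Icc 0 T)) :
    TendstoUniformlyOn (fun i t => ∫ s in 0..t, K (t - s) • F i s) (fun _ => 0) l (Icc 0 T) := by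
  obtain ⟨M, hM⟩ := isCompact_Icc.exists_bound_of_continuousOn hK
  rw [Metric.tendstoUniformlyOn_iff] at hF ⊢
  intro ε hε
  have hC : 0 < |M * T| + 1 := by positivity
  filter_upwards [hF (ε / (|M * T| + 1)) (by positivity)] with i hi t ht
  have hFi : ∀ s ∈ Icc 0 T, ‖F i s‖ ≤ ε / (|M * T| + 1) := fun s hs => by
    simpa only [dist_zero_left] using (hi s hs).le
  rw [dist_zero_left]
  calc ‖∫ s in 0..t, K (t - s) • F i s‖ ≤ M * (ε / (|M * T| + 1)) * T :=
        norm_integral_comp_sub_smul_le hM hFi ht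
    _ = M * T * (ε / (|M * T| + 1)) := by ring
    _ ≤ |M * T| * (ε / (|M * T| + 1)) := by gcongr; exact le_abs_self _
    _ < ε := by
      rw [mul_div_assoc', div_lt_iff₀ hC]
      nlinarith

theorem tendstoUniformlyOn_sum_smul_of_integro_differential [CompleteSpace H]
    {T b : ℝ} {K : ℝ → ℝ} (hK : ContinuousOn K (Icc 0 T)) {lam : ℕ → ℝ} {ψ ψ'' : ℕ → ℝ → ℝ}
    (hψ : ∀ n, ContinuousOn (ψ n) (Icc 0 T))
    (heq : ∀ n, ∀ t ∈ Icc 0 T,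
      ψ'' n t = -lam n ^ 2 * ψ n t + b * ψ n t + ∫ s in (0 : ℝ)..t, K (t - s) * ψ n s)
    {v : ℕ → H}
    (hsum : TendstoUniformlyOn
      (fun N t => ∑ n ∈ Finset.range N, ψ n t • v n) (fun _ => 0) atTop (Icc 0 T))
    {S : ℝ → H}
    (hS : TendstoUniformlyOn
      (fun N t => ∑ n ∈ Finset.range N, (lam n ^ 2 * ψ n t) • v n) S atTop (Icc 0 T)) :
    TendstoUniformlyOn (fun N t => ∑ n ∈ Finset.range N, ψ'' n t • v n) (-S) atTop (Icc 0 T) := by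
  have hsplit : ∀ N, ∀ t ∈ Icc 0 T, ∑ n ∈ Finset.range N, ψ'' n t • v n =
      b • ∑ n ∈ Finset.range N, ψ n t • v n
        + (∫ s in (0 : ℝ)..t, K (t - s) • ∑ n ∈ Finset.range N, ψ n s • v n)
        - ∑ n ∈ Finset.range N, (lam n ^ 2 * ψ n t) • v n := by
    intro N t ht
    rw [integral_smul_finset_sum_smul _ _
      fun n _ => intervalIntegrable_comp_sub_mul hK (hψ n) ht, Finset.smul_sum,
      ← Finset.sum_add_distrib, ← Finset.sum_sub_distrib]
    refine Finset.sum_congr rfl fun n _ => ?_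
    rw [heq n t ht, smul_smul, ← add_smul, ← sub_smul]
    ring_nf
  have hlim := (((uniformContinuous_const_smul b).comp_tendstoUniformlyOn hsum).add
    (hsum.integral_comp_sub_smul hK)).sub hS
  convert hlim.congr (.of_forall fun N t ht => (hsplit N t ht).symm) using 1
  ext t
  simp

end

theorem series_iteration_step_general
    (T : ℝ) (hT : 0 < T) (b : ℝ) (K : ℝ → ℝ) (hK : ContinuousOn K (Icc 0 T))
    (lam : ℕ → ℝ)
    (ψ ψ' ψ'' : ℕ → ℝ → ℝ)
    (hψ : ∀ n, ∀ t ∈ Icc 0 T, HasDerivAt (ψ n) (ψ' n t) t)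
    (hψ' : ∀ n, ∀ t ∈ Icc 0 T, HasDerivAt (ψ' n) (ψ'' n t) t)
    (heq : ∀ n, ∀ t ∈ Icc 0 T,
      ψ'' n t = -lam n ^ 2 * ψ n t + b * ψ n t + ∫ s in (0 : ℝ)..t, K (t - s) * ψ n s)
    {H : Type*} [NormedAddCommGroup H] [NormedSpace ℝ H] [CompleteSpace H]
    (v : ℕ → H)
    (hsum : TendstoUniformlyOn
      (fun N t => ∑ n ∈ Finset.range N, ψ n t • v n) (fun _ => (0 : H)) atTop (Icc 0 T))
    (hderiv : ∃ g : ℝ → H, TendstoUniformlyOn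
      (fun N t => ∑ n ∈ Finset.range N, ψ' n t • v n) g atTop (Icc 0 T))
    (S : ℝ → H)
    (hS : TendstoUniformlyOn
      (fun N t => ∑ n ∈ Finset.range N, (lam n ^ 2 * ψ n t) • v n) S atTop (Icc 0 T)) :
    ∀ t ∈ Icc 0 T, S t = 0 := by
  obtain ⟨g, hg⟩ := hderiv
  have hsub : Ioo 0 T ⊆ Icc 0 T := Ioo_subset_Icc_self
  have hψc : ∀ n, ContinuousOn (ψ n) (Icc 0 T) := fun n t ht =>
    (hψ n t ht).continuousAt.continuousWithinAt
  have hg0 : EqOn g 0 (Ioo 0 T) := eqOn_zero_of_tendstoUniformlyOn_deriv isOpen_Ioo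
    (fun N t ht => .fun_sum fun n _ => (hψ n t (hsub ht)).smul_const (v n))
    (fun t ht => hsum.tendsto_at (hsub ht)) (hg.mono hsub)
  have hS0 : EqOn (-S) 0 (Ioo 0 T) := eqOn_zero_of_tendstoUniformlyOn_deriv isOpen_Ioo
    (fun N t ht => .fun_sum fun n _ => (hψ' n t (hsub ht)).smul_const (v n))
    (fun t ht => by simpa [hg0 ht] using hg.tendsto_at (hsub ht))
    ((tendstoUniformlyOn_sum_smul_of_integro_differential hK hψc heq hsum hS).mono hsub)
  have hScont : ContinuousOn S (Icc 0 T) := hS.continuousOn <| .of_forall fun N =>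
    continuousOn_finsetSum _ fun n _ => (continuousOn_const.mul (hψc n)).smul continuousOn_const
  intro t ht
  exact neg_eq_zero.mp <| hS0.of_subset_closure hScont.neg continuousOn_const hsub
    (closure_Ioo hT.ne).symm.subset ht

/-- Iteration step in the proof of controllability: if the series `∑ ψₙ(t) vₙ` converges
uniformly on `[0, T]` with sum `0`, the termwise differentiated series `∑ ψₙ'(t) vₙ`
converges uniformly, and the series `∑ λₙ² ψₙ(t) vₙ` converges uniformly to `S`, then
`S = 0` on `[0, T]`.  Here each `ψₙ` solves `ψₙ'' = -λₙ² ψₙ + b ψₙ + K * ψₙ`,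
`ψₙ(0) = 0`, `ψₙ'(0) = 1`. -/
theorem series_iteration_step
    (T : ℝ) (hT : 0 < T) (b : ℝ) (K : ℝ → ℝ) (hK : ContinuousOn K (Icc 0 T))
    (lam : ℕ → ℝ) (hpos : ∀ n, 0 < lam n)
    (ψ ψ' ψ'' : ℕ → ℝ → ℝ)
    (hψ : ∀ n, ∀ t ∈ Icc 0 T, HasDerivAt (ψ n) (ψ' n t) t)
    (hψ' : ∀ n, ∀ t ∈ Icc 0 T, HasDerivAt (ψ' n) (ψ'' n t) t)
    (hψ'' : ∀ n, ContinuousOn (ψ'' n) (Icc 0 T))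
    (heq : ∀ n, ∀ t ∈ Icc 0 T,
      ψ'' n t = -lam n ^ 2 * ψ n t + b * ψ n t + ∫ s in (0 : ℝ)..t, K (t - s) * ψ n s)
    (h0 : ∀ n, ψ n 0 = 0) (h1 : ∀ n, ψ' n 0 = 1)
    {H : Type*} [NormedAddCommGroup H] [NormedSpace ℝ H] [CompleteSpace H]
    (v : ℕ → H)
    (hsum : TendstoUniformlyOn
      (fun N t => ∑ n ∈ Finset.range N, ψ n t • v n) (fun _ => (0 : H)) atTop (Icc 0 T))
    (hderiv : ∃ g : ℝ → H, TendstoUniformlyOn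
      (fun N t => ∑ n ∈ Finset.range N, ψ' n t • v n) g atTop (Icc 0 T))
    (S : ℝ → H)
    (hS : TendstoUniformlyOn
      (fun N t => ∑ n ∈ Finset.range N, (lam n ^ 2 * ψ n t) • v n) S atTop (Icc 0 T)) :
    ∀ t ∈ Icc 0 T, S t = 0 :=
  series_iteration_step_general T hT b K hK lam ψ ψ' ψ'' hψ hψ' heq v hsum hderiv S hS
end
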